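/- Let K be a field with char(K) > 3, a, b ∈ K, and A = (x_A, y_A) a point on y² = x³ + ax + b with y_A ≠ 0, such that A+A has nonzero y-coordinate, (A+A)+A ≠ ±A, and A+A ≠ ±A. Then (A + A) + (A + A) = A + (A + (A + A)), where duplications use the tangent formula and the remaining sums the chord formula. -/

import Mathlib

/-- The chord construction. -/
def chord {K : Type*} [Field K] (P Q : K × K) : K × K :=
  let α := (P.2 - Q.2) / (P.1 - Q.1)
  let x := α ^ 2 - P.1 - Q.1
  (x, -P.2 + α * (P.1 - x))

/-- The tangent (duplication) construction. -/
def tangent {K : Type*} [Field K] (a : K) (P : K × K) : K × K :=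
  let α := (3 * P.1 ^ 2 + a) / (2 * P.2)
  let x := α ^ 2 - 2 * P.1
  (x, -P.2 + α * (P.1 - x))

/-!
The chord and tangent constructions compute the sum in the group `W.Point` of nonsingular points
of the curve `W : y² = x³ + ax + b`, as soon as the two summands have distinct `x`-coordinates
(chord) or the point being doubled is not `2`-torsion (tangent). Under the hypotheses every sum
in the identity is of this kind, so the identity is the associativity
`(A + A) + (A + A) = A + (A + (A + A))` of the group law.
-/

open WeierstrassCurve.Affine

section

variable {K : Type*} [Field K]

abbrev shortWeierstrass (a b : K) : WeierstrassCurve.Affine K := ⟨0, 0, 0, a, b⟩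

namespace shortWeierstrass

variable {a b : K}

@[simp]
lemma negY_eq (x y : K) : (shortWeierstrass a b).negY x y = -y := by
  simp

lemma equation_iff {x y : K} :
    (shortWeierstrass a b).Equation x y ↔ y ^ 2 = x ^ 3 + a * x + b := by
  rw [WeierstrassCurve.Affine.equation_iff]
  constructor <;> intro h <;> linear_combination h

lemma Y_ne_negY_of_Y_ne_zero (h2 : (2 : K) ≠ 0) {x y : K} (hy : y ≠ 0) :
    y ≠ (shortWeierstrass a b).negY x y := by
  rw [negY_eq, ne_eq, eq_neg_iff_add_eq_zero, ← two_mul]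
  exact mul_ne_zero h2 hy

lemma nonsingular_of_Y_ne_zero (h2 : (2 : K) ≠ 0) {x y : K}
    (h : y ^ 2 = x ^ 3 + a * x + b) (hy : y ≠ 0) : (shortWeierstrass a b).Nonsingular x y :=
  (nonsingular_iff x y).mpr ⟨equation_iff.mpr h, Or.inr (Y_ne_negY_of_Y_ne_zero h2 hy)⟩

lemma fst_ne_of_ne_of_ne_neg {P Q : K × K} (hP : (shortWeierstrass a b).Equation P.1 P.2)
    (hQ : (shortWeierstrass a b).Equation Q.1 Q.2) (hPQ : P ≠ Q) (hPQ' : P ≠ (Q.1, -Q.2)) :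
    P.1 ≠ Q.1 := by
  intro hx
  rcases Y_eq_of_X_eq hP hQ hx with hy | hy
  · exact hPQ (Prod.ext hx hy)
  · exact hPQ' (Prod.ext hx (by simpa using hy))

section

variable [DecidableEq K]

lemma tangent_eq_add (h2 : (2 : K) ≠ 0) {P : K × K} (hy : P.2 ≠ 0) :
    tangent a P =
      ((shortWeierstrass a b).addX P.1 P.1 ((shortWeierstrass a b).slope P.1 P.1 P.2 P.2),
        (shortWeierstrass a b).addY P.1 P.1 P.2
          ((shortWeierstrass a b).slope P.1 P.1 P.2 P.2)) := by
  rw [slope_of_Y_ne rfl (Y_ne_negY_of_Y_ne_zero h2 hy)]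
  simp only [tangent, addY, negAddY, addX, negY_eq]
  ext <;> ring

lemma chord_eq_add {P Q : K × K} (hx : P.1 ≠ Q.1) :
    chord P Q =
      ((shortWeierstrass a b).addX P.1 Q.1 ((shortWeierstrass a b).slope P.1 Q.1 P.2 Q.2),
        (shortWeierstrass a b).addY P.1 Q.1 P.2
          ((shortWeierstrass a b).slope P.1 Q.1 P.2 Q.2)) := by
  rw [slope_of_X_ne hx]
  simp only [chord, addY, negAddY, addX, negY_eq]
  ext <;> ring

lemma exists_add_self_eq_tangent (h2 : (2 : K) ≠ 0) {P : K × K}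
    (hP : (shortWeierstrass a b).Nonsingular P.1 P.2) (hy : P.2 ≠ 0) :
    ∃ hT : (shortWeierstrass a b).Nonsingular (tangent a P).1 (tangent a P).2,
      Point.some _ _ hP + Point.some _ _ hP = Point.some _ _ hT := by
  rw [tangent_eq_add (b := b) h2 hy]
  exact ⟨_, Point.add_self_of_Y_ne (Y_ne_negY_of_Y_ne_zero h2 hy)⟩

lemma exists_add_eq_chord {P Q : K × K} (hP : (shortWeierstrass a b).Nonsingular P.1 P.2)
    (hQ : (shortWeierstrass a b).Nonsingular Q.1 Q.2) (hx : P.1 ≠ Q.1) :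
    ∃ hC : (shortWeierstrass a b).Nonsingular (chord P Q).1 (chord P Q).2,
      Point.some _ _ hP + Point.some _ _ hQ = Point.some _ _ hC := by
  rw [chord_eq_add (a := a) (b := b) hx]
  exact ⟨_, Point.add_of_X_ne hx⟩

end

end shortWeierstrass

lemma chord_comm {P Q : K × K} (hx : P.1 ≠ Q.1) : chord P Q = chord Q P := by
  have hPQ : P.1 - Q.1 ≠ 0 := sub_ne_zero.mpr hx
  have hQP : Q.1 - P.1 ≠ 0 := sub_ne_zero.mpr hx.symm
  simp only [chord]
  ext <;> field_simp <;> ring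

end

open shortWeierstrass in
theorem quadruple_assoc_general {K : Type*} [Field K] (h2 : (2 : K) ≠ 0)
    (a b : K) (A : K × K)
    (hA : A.2 ^ 2 = A.1 ^ 3 + a * A.1 + b)
    (hy : A.2 ≠ 0) (hy2 : (tangent a A).2 ≠ 0)
    (h3A : chord (tangent a A) A ≠ A ∧ chord (tangent a A) A ≠ (A.1, -A.2))
    (h2A : tangent a A ≠ A ∧ tangent a A ≠ (A.1, -A.2)) :
    tangent a (tangent a A) = chord A (chord A (tangent a A)) := by
  classical
  have hA' := nonsingular_of_Y_ne_zero h2 hA hy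
  obtain ⟨hT, hAA⟩ := exists_add_self_eq_tangent h2 hA' hy
  obtain ⟨hF, hTT⟩ := exists_add_self_eq_tangent h2 hT hy2
  have hTA : (tangent a A).1 ≠ A.1 := fst_ne_of_ne_of_ne_neg hT.1 hA'.1 h2A.1 h2A.2
  rw [chord_comm hTA] at h3A
  obtain ⟨hS, hAT⟩ := exists_add_eq_chord hA' hT hTA.symm
  have hSA := fst_ne_of_ne_of_ne_neg hS.1 hA'.1 h3A.1 h3A.2
  obtain ⟨hF', hAS⟩ := exists_add_eq_chord hA' hS hSA.symm
  have hF_eq : Point.some _ _ hF = Point.some _ _ hF' := by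
    rw [← hTT, ← hAS, ← hAT, ← hAA, add_assoc]
  simpa [Prod.ext_iff] using hF_eq

theorem quadruple_assoc {K : Type*} [Field K] (h2 : (2 : K) ≠ 0) (h3 : (3 : K) ≠ 0)
    (a b : K) (A : K × K)
    (hA : A.2 ^ 2 = A.1 ^ 3 + a * A.1 + b)
    (hy : A.2 ≠ 0) (hy2 : (tangent a A).2 ≠ 0)
    (h3A : chord (tangent a A) A ≠ A ∧ chord (tangent a A) A ≠ (A.1, -A.2))
    (h2A : tangent a A ≠ A ∧ tangent a A ≠ (A.1, -A.2)) :
    tangent a (tangent a A) = chord A (chord A (tangent a A)) :=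
  quadruple_assoc_general h2 a b A hA hy hy2 h3A h2A
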